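/- Let f, g : ℝ → ℝ be even functions with ∫_ℝ |f(x)|(x² ∨ 1) dx < ∞ and ∫_ℝ |g(x)|(x² ∨ 1) dx < ∞, and suppose ∫_ℝ f(x) dx ≠ 0. Then for every σ > 0 and every h ∈ ℝ, | σ² E[g(h + σZ)] − ((∫g)/(∫f)) · σ² E[f(h + σZ)] | ≤ (1/(2√(2π) σ)) · ( (∫_ℝ y²|f(y)|dy / |∫_ℝ f(y)dy|) · ∫_ℝ |g(y)| dy + ∫_ℝ y²|g(y)| dy ). -/

import Mathlib

open MeasureTheory Filter

/-- Standard Gaussian density. -/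
noncomputable def stdGauss (z : ℝ) : ℝ := Real.exp (-z ^ 2 / 2) / Real.sqrt (2 * Real.pi)

/-- Gaussian expectation `E[f(h + σ Z)]` for a standard Gaussian `Z`. -/
noncomputable def gexp (f : ℝ → ℝ) (σ h : ℝ) : ℝ := ∫ z, f (h + σ * z) * stdGauss z

/-!
Substituting `y = h + σ z` and using that `f` is even, `σ² E[f(h + σZ)] = σ ∫ f(y) k(y) dy`
for the symmetrised kernel `k(y) = (φ((y - h)/σ) + φ((y + h)/σ)) / 2`, `φ` the Gaussian density.
Since `φ' = -z φ` is `(2π)^{-1/2}`-Lipschitz, the second symmetric difference of `φ` gives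
`|k(y) - k(0)| ≤ y² / (2 √(2π) σ²)`. Writing `∫ u k = k(0) ∫ u + ∫ u (k - k(0))`, the terms
`k(0) ∫ g` cancel in `∫ g k - (∫ g / ∫ f) ∫ f k`, and the two remainders are bounded by the
second moments of `|f|` and `|g|`.
-/

lemma abs_sub_le_mul_sq_of_abs_deriv_le {ρ ρ' : ℝ → ℝ} {C : ℝ}
    (hρ : ∀ s, HasDerivAt ρ (ρ' s) s) (hρ' : ∀ s, |ρ' s| ≤ 2 * C * |s|) (t : ℝ) :
    |ρ t - ρ 0| ≤ C * t ^ 2 := by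
  wlog ht : 0 ≤ t generalizing ρ ρ' t
  · simpa using this (ρ := fun s => ρ (-s)) (ρ' := fun s => -ρ' (-s))
      (fun s => by simpa [Function.comp_def] using (hρ (-s)).scomp s (hasDerivAt_neg s))
      (fun s => by simpa using hρ' (-s)) (-t) (by linarith)
  refine image_norm_le_of_norm_deriv_right_le_deriv_boundary (f := fun s => ρ s - ρ 0)
    (B := fun s => C * s ^ 2) (B' := fun s => 2 * C * s) (a := 0) (b := t)
    (fun s _ => ((hρ s).sub_const _).continuousAt.continuousWithinAt)
    (fun s _ => ((hρ s).sub_const _).hasDerivWithinAt) (by simp)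
    (fun s => by simpa [mul_comm, mul_left_comm] using (hasDerivAt_pow 2 s).const_mul C)
    (fun s hs => by simpa [abs_of_nonneg hs.1] using hρ' s) ⟨ht, le_rfl⟩

lemma abs_add_add_sub_two_mul_le_of_lipschitz {f f' : ℝ → ℝ} {L : ℝ}
    (hf : ∀ x, HasDerivAt f (f' x) x) (hL : ∀ x y, |f' x - f' y| ≤ L * |x - y|) (a t : ℝ) :
    |f (a + t) + f (a - t) - 2 * f a| ≤ L * t ^ 2 := by
  have hρ (s : ℝ) : HasDerivAt (fun s => f (a + s) + f (a - s)) (f' (a + s) - f' (a - s)) s :=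
    ((hf _).comp_const_add a s).add ((hf _).comp_const_sub a s)
  have hρ' (s : ℝ) : |f' (a + s) - f' (a - s)| ≤ 2 * L * |s| := by
    simpa [abs_mul, ← two_mul, mul_left_comm, mul_assoc] using hL (a + s) (a - s)
  simpa [two_mul] using abs_sub_le_mul_sq_of_abs_deriv_le hρ hρ' t

lemma stdGauss_pos (z : ℝ) : 0 < stdGauss z := by
  unfold stdGauss; positivity

lemma stdGauss_le (z : ℝ) : stdGauss z ≤ (√(2 * Real.pi))⁻¹ := by
  rw [stdGauss, div_eq_mul_inv]
  exact mul_le_of_le_one_left (by positivity) (Real.exp_le_one_iff.2 (by nlinarith))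

lemma stdGauss_neg (z : ℝ) : stdGauss (-z) = stdGauss z := by
  simp [stdGauss]

@[fun_prop]
lemma continuous_stdGauss : Continuous stdGauss := by
  unfold stdGauss; fun_prop

lemma hasDerivAt_stdGauss (z : ℝ) : HasDerivAt stdGauss (-z * stdGauss z) z := by
  have hq : HasDerivAt (fun x : ℝ => -x ^ 2 / 2) (-z) z := by
    simpa using ((hasDerivAt_pow 2 z).neg.div_const 2).congr_deriv (by ring)
  exact (hq.exp.div_const _).congr_deriv (by rw [stdGauss]; ring)

lemma hasDerivAt_neg_mul_stdGauss (z : ℝ) :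
    HasDerivAt (fun z => -z * stdGauss z) ((z ^ 2 - 1) * stdGauss z) z :=
  ((hasDerivAt_neg z).mul (hasDerivAt_stdGauss z)).congr_deriv (by ring)

lemma abs_sq_sub_one_le_exp (z : ℝ) : |z ^ 2 - 1| ≤ Real.exp (z ^ 2 / 2) := by
  have := Real.quadratic_le_exp_of_nonneg (by positivity : 0 ≤ z ^ 2 / 2)
  rw [abs_le]
  constructor <;> nlinarith [sq_nonneg (z ^ 2 - 2)]

lemma abs_sq_sub_one_mul_stdGauss_le (z : ℝ) :
    |(z ^ 2 - 1) * stdGauss z| ≤ (√(2 * Real.pi))⁻¹ := by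
  have hexp : Real.exp (-z ^ 2 / 2) = (Real.exp (z ^ 2 / 2))⁻¹ := by
    rw [← Real.exp_neg, neg_div]
  rw [stdGauss, abs_mul, abs_div, abs_of_pos (Real.exp_pos _),
    abs_of_pos (Real.sqrt_pos.2 Real.two_pi_pos), hexp, div_eq_mul_inv, ← mul_assoc]
  exact mul_le_of_le_one_left (by positivity)
    (mul_inv_le_one_of_le₀ (abs_sq_sub_one_le_exp z) (Real.exp_pos _).le)

lemma abs_neg_mul_stdGauss_sub_le (x y : ℝ) :
    |-x * stdGauss x - -y * stdGauss y| ≤ (√(2 * Real.pi))⁻¹ * |x - y| := by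
  simpa only [Real.norm_eq_abs] using Convex.norm_image_sub_le_of_norm_hasDerivWithin_le
    (fun z _ => (hasDerivAt_neg_mul_stdGauss z).hasDerivWithinAt)
    (fun z _ => abs_sq_sub_one_mul_stdGauss_le z) convex_univ (Set.mem_univ y) (Set.mem_univ x)

lemma abs_stdGauss_add_add_sub_two_mul_le (a t : ℝ) :
    |stdGauss (a + t) + stdGauss (a - t) - 2 * stdGauss a| ≤ (√(2 * Real.pi))⁻¹ * t ^ 2 :=
  abs_add_add_sub_two_mul_le_of_lipschitz hasDerivAt_stdGauss abs_neg_mul_stdGauss_sub_le a t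

section Moments

variable {μ : Measure ℝ} {f : ℝ → ℝ}

lemma aestronglyMeasurable_of_integrable_mul_sq_sup_one
    (hf : Integrable (fun x => f x * (x ^ 2 ⊔ 1)) μ) : AEStronglyMeasurable f μ := by
  have hw : Continuous fun x : ℝ => (x ^ 2 ⊔ 1)⁻¹ :=
    ((continuous_pow 2).sup continuous_const).inv₀ fun x => by positivity
  refine (hf.aestronglyMeasurable.mul hw.aestronglyMeasurable).congr (ae_of_all _ fun x => ?_)
  have : (x ^ 2 ⊔ 1 : ℝ) ≠ 0 := by positivity
  simp [this]

lemma integrable_of_integrable_mul_sq_sup_one (hf : Integrable (fun x => f x * (x ^ 2 ⊔ 1)) μ) :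
    Integrable f μ :=
  hf.mono (aestronglyMeasurable_of_integrable_mul_sq_sup_one hf) (ae_of_all _ fun x => by
    rw [norm_mul, Real.norm_of_nonneg (by positivity : (0 : ℝ) ≤ x ^ 2 ⊔ 1)]
    exact le_mul_of_one_le_right (norm_nonneg _) le_sup_right)

lemma integrable_sq_mul_abs_of_integrable_mul_sq_sup_one
    (hf : Integrable (fun x => f x * (x ^ 2 ⊔ 1)) μ) : Integrable (fun x => x ^ 2 * |f x|) μ :=
  hf.mono ((continuous_pow 2).aestronglyMeasurable.mul
      (aestronglyMeasurable_of_integrable_mul_sq_sup_one hf).norm)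
    (ae_of_all _ fun x => by
      simp only [norm_mul, Real.norm_eq_abs, abs_abs, abs_of_nonneg (sq_nonneg x),
        abs_of_nonneg (by positivity : (0 : ℝ) ≤ x ^ 2 ⊔ 1)]
      rw [mul_comm]
      exact mul_le_mul_of_nonneg_left le_sup_left (abs_nonneg _))

end Moments

section Comparison

variable {μ : Measure ℝ} {f g k : ℝ → ℝ} {B : ℝ}

lemma abs_integral_mul_sub_mul_integral_le (hf : Integrable f μ)
    (hf2 : Integrable (fun y => y ^ 2 * |f y|) μ) (hk : AEStronglyMeasurable k μ)
    (hkB : ∀ y, |k y - k 0| ≤ B * y ^ 2) :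
    |∫ y, f y * k y ∂μ - k 0 * ∫ y, f y ∂μ| ≤ B * ∫ y, y ^ 2 * |f y| ∂μ := by
  have hbound (y : ℝ) : |f y * (k y - k 0)| ≤ B * (y ^ 2 * |f y|) := by
    rw [abs_mul]
    linarith [mul_le_mul_of_nonneg_left (hkB y) (abs_nonneg (f y))]
  have hint : Integrable (fun y => f y * (k y - k 0)) μ :=
    (hf2.const_mul B).mono' (hf.aestronglyMeasurable.mul (hk.sub aestronglyMeasurable_const))
      (ae_of_all _ hbound)
  have hsplit :
      ∫ y, f y * k y ∂μ = ∫ y, f y * (k y - k 0) ∂μ + k 0 * ∫ y, f y ∂μ := by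
    rw [← integral_const_mul, ← integral_add hint (hf.const_mul _)]
    congr 1 with y
    ring
  rw [hsplit, add_sub_cancel_right, ← integral_const_mul]
  exact (abs_integral_le_integral_abs).trans
    (integral_mono hint.abs (hf2.const_mul B) hbound)

lemma abs_integral_mul_sub_div_mul_integral_mul_le (hf : Integrable f μ)
    (hf2 : Integrable (fun y => y ^ 2 * |f y|) μ) (hg : Integrable g μ)
    (hg2 : Integrable (fun y => y ^ 2 * |g y|) μ) (hk : AEStronglyMeasurable k μ)
    (hkB : ∀ y, |k y - k 0| ≤ B * y ^ 2) (hf0 : ∫ y, f y ∂μ ≠ 0) :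
    |∫ y, g y * k y ∂μ - (∫ y, g y ∂μ) / (∫ y, f y ∂μ) * ∫ y, f y * k y ∂μ|
      ≤ B * ((∫ y, y ^ 2 * |f y| ∂μ) / |∫ y, f y ∂μ| * (∫ y, |g y| ∂μ)
        + ∫ y, y ^ 2 * |g y| ∂μ) := by
  set F := ∫ y, f y ∂μ
  set G := ∫ y, g y ∂μ
  have hef := abs_integral_mul_sub_mul_integral_le hf hf2 hk hkB
  have heg := abs_integral_mul_sub_mul_integral_le hg hg2 hk hkB
  set ef := ∫ y, f y * k y ∂μ - k 0 * F
  set eg := ∫ y, g y * k y ∂μ - k 0 * G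
  have hdiff : ∫ y, g y * k y ∂μ - G / F * ∫ y, f y * k y ∂μ = eg - G / F * ef := by
    simp only [ef, eg]
    field_simp
    ring
  have hG : |G| ≤ ∫ y, |g y| ∂μ := abs_integral_le_integral_abs
  have hFpos : 0 < |F| := abs_pos.2 hf0
  rw [hdiff]
  calc |eg - G / F * ef| ≤ |eg| + |G| / |F| * |ef| := by
        rw [← abs_div, ← abs_mul]; exact abs_sub _ _
    _ ≤ B * ∫ y, y ^ 2 * |g y| ∂μ
          + (∫ y, |g y| ∂μ) / |F| * (B * ∫ y, y ^ 2 * |f y| ∂μ) := by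
        gcongr
    _ = _ := by ring

end Comparison

lemma MeasureTheory.Integrable.mul_stdGauss_comp {μ : Measure ℝ} {f u : ℝ → ℝ}
    (hf : Integrable f μ) (hu : Measurable u) : Integrable (fun y => f y * stdGauss (u y)) μ :=
  hf.mul_bdd (continuous_stdGauss.measurable.comp hu).aestronglyMeasurable
    (ae_of_all _ fun _ => (Real.norm_of_nonneg (stdGauss_pos _).le).trans_le (stdGauss_le _))

lemma mul_gexp_eq_integral_mul_stdGauss (f : ℝ → ℝ) {σ : ℝ} (hσ : 0 < σ) (h : ℝ) :
    σ * gexp f σ h = ∫ y, f y * stdGauss ((y - h) / σ) := by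
  calc σ * gexp f σ h = |σ| • ∫ z, f (h + σ * z) * stdGauss z := by
        rw [abs_of_pos hσ, smul_eq_mul, gexp]
    _ = ∫ x, f (x + h) * stdGauss (x / σ) := by
        rw [← Measure.integral_comp_div]
        congr 1 with x
        rw [mul_div_cancel₀ _ hσ.ne', add_comm]
    _ = ∫ y, f y * stdGauss ((y - h) / σ) := by
        simpa using integral_sub_right_eq_self (fun y => f y * stdGauss ((y - h) / σ)) (-h)

lemma integral_mul_stdGauss_sub_div_of_even {f : ℝ → ℝ} (hfe : ∀ x, f (-x) = f x)
    (σ h : ℝ) :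
    ∫ y, f y * stdGauss ((y - h) / σ) = ∫ y, f y * stdGauss ((y + h) / σ) := by
  rw [← integral_neg_eq_self]
  congr 1 with y
  rw [hfe, ← stdGauss_neg]
  ring_nf

noncomputable def symmGaussKernel (σ h y : ℝ) : ℝ :=
  (stdGauss ((y - h) / σ) + stdGauss ((y + h) / σ)) / 2

lemma continuous_symmGaussKernel (σ h : ℝ) : Continuous (symmGaussKernel σ h) := by
  unfold symmGaussKernel
  fun_prop

lemma abs_symmGaussKernel_sub_le (σ h y : ℝ) :
    |symmGaussKernel σ h y - symmGaussKernel σ h 0|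
      ≤ (2 * √(2 * Real.pi) * σ ^ 2)⁻¹ * y ^ 2 := by
  have hφ := abs_stdGauss_add_add_sub_two_mul_le (h / σ) (y / σ)
  have hK : symmGaussKernel σ h y - symmGaussKernel σ h 0
      = (stdGauss (h / σ + y / σ) + stdGauss (h / σ - y / σ) - 2 * stdGauss (h / σ)) / 2 := by
    simp only [symmGaussKernel, zero_sub, zero_add, neg_div, stdGauss_neg]
    rw [← stdGauss_neg ((y - h) / σ)]
    ring_nf
  rw [hK, abs_div, abs_two]
  calc _ ≤ (√(2 * Real.pi))⁻¹ * (y / σ) ^ 2 / 2 := by gcongr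
    _ = _ := by ring

lemma sq_mul_gexp_eq_mul_integral_symmGaussKernel {f : ℝ → ℝ} (hfe : ∀ x, f (-x) = f x)
    (hf : Integrable f) {σ : ℝ} (hσ : 0 < σ) (h : ℝ) :
    σ ^ 2 * gexp f σ h = σ * ∫ y, f y * symmGaussKernel σ h y := by
  have hsub := hf.mul_stdGauss_comp (u := fun y => (y - h) / σ) (by fun_prop)
  have hadd := hf.mul_stdGauss_comp (u := fun y => (y + h) / σ) (by fun_prop)
  have hsymm : ∫ y, f y * symmGaussKernel σ h y
      = ((∫ y, f y * stdGauss ((y - h) / σ)) + ∫ y, f y * stdGauss ((y + h) / σ)) / 2 := by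
    rw [← integral_add hsub hadd, ← integral_div]
    congr 1 with y
    rw [symmGaussKernel]
    ring
  rw [hsymm, ← integral_mul_stdGauss_sub_div_of_even hfe,
    ← mul_gexp_eq_integral_mul_stdGauss f hσ h]
  ring

theorem stmt_3 (f g : ℝ → ℝ) (hfe : ∀ x, f (-x) = f x) (hge : ∀ x, g (-x) = g x)
    (hfint : Integrable (fun x => f x * (x ^ 2 ⊔ 1)))
    (hgint : Integrable (fun x => g x * (x ^ 2 ⊔ 1)))
    (hf0 : (∫ x, f x) ≠ 0)
    (σ : ℝ) (hσ : 0 < σ) (h : ℝ) :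
    |σ ^ 2 * gexp g σ h - ((∫ x, g x) / ∫ x, f x) * (σ ^ 2 * gexp f σ h)|
      ≤ 1 / (2 * Real.sqrt (2 * Real.pi) * σ) *
          ((∫ y, y ^ 2 * |f y|) / |∫ y, f y| * (∫ y, |g y|) + ∫ y, y ^ 2 * |g y|) := by
  have hf := integrable_of_integrable_mul_sq_sup_one hfint
  have hg := integrable_of_integrable_mul_sq_sup_one hgint
  have hcomp := abs_integral_mul_sub_div_mul_integral_mul_le hf
    (integrable_sq_mul_abs_of_integrable_mul_sq_sup_one hfint) hg
    (integrable_sq_mul_abs_of_integrable_mul_sq_sup_one hgint)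
    (continuous_symmGaussKernel σ h).aestronglyMeasurable (abs_symmGaussKernel_sub_le σ h) hf0
  rw [sq_mul_gexp_eq_mul_integral_symmGaussKernel hfe hf hσ,
    sq_mul_gexp_eq_mul_integral_symmGaussKernel hge hg hσ, mul_left_comm, ← mul_sub, abs_mul,
    abs_of_pos hσ]
  calc _ ≤ σ * ((2 * √(2 * Real.pi) * σ ^ 2)⁻¹ * ((∫ y, y ^ 2 * |f y|) / |∫ y, f y|
          * (∫ y, |g y|) + ∫ y, y ^ 2 * |g y|)) := mul_le_mul_of_nonneg_left hcomp hσ.le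
    _ = _ := by field_simp
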